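/- arXiv:2212.07298 — 5 statements merged into one kernel-verified Lean document; each statement's English description precedes it below -/
import Mathlib

section
/- Let ν : (-∞,0) → ℝ₊ be an increasing function such that lim_{t→-∞} e^{-Bt} ν(t) ≤ A for some constants A, B > 0. Then for all p > B, liminf_{t→-∞} e^{-Bt} ∫_t^0 e^{-p(s-t)} dν(s) ≤ AB/(p-B), where the integral is the Lebesgue–Stieltjes integral with respect to ν. -/
/-!
Integrating by parts against `dν` and writing `w u = e^{-Bu} ν(u)`, the quantity under the liminf
equals `e^{(p-B)t} w(0) - w(t) + p ∫_t^0 e^{-(p-B)(u-t)} w(u) du`. The last integral is an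
exponentially weighted average of `w` with total mass at most `1/(p-B)`, concentrated near `t`, so
`w(t) → L` forces it to tend to `L/(p-B)`. Hence the quantity actually converges, to
`-L + pL/(p-B) = LB/(p-B) ≤ AB/(p-B)`.
-/

open Filter MeasureTheory Real Set Topology

theorem tendsto_exp_neg_mul_sub_atBot {q : ℝ} (hq : 0 < q) (b : ℝ) :
    Tendsto (fun t => exp (-q * (b - t))) atBot (𝓝 0) := by
  refine tendsto_exp_atBot.comp ?_
  have : Tendsto (fun t => q * t + -q * b) atBot atBot :=
    tendsto_atBot_add_const_right _ _ (tendsto_id.const_mul_atBot hq)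
  convert this using 2 with t
  ring

theorem integral_exp_neg_mul_sub {q : ℝ} (hq : q ≠ 0) (t a b : ℝ) :
    ∫ u in a..b, exp (-q * (u - t)) = (exp (-q * (a - t)) - exp (-q * (b - t))) / q := by
  have hderiv : ∀ u, HasDerivAt (fun u => -exp (-q * (u - t)) / q) (exp (-q * (u - t))) u := by
    intro u
    refine ((((hasDerivAt_id u).sub_const t).const_mul (-q)).exp.neg.div_const q).congr_deriv ?_
    field_simp
    simp
  rw [intervalIntegral.integral_eq_sub_of_hasDerivAt (fun u _ => hderiv u)
    (Continuous.intervalIntegrable (by fun_prop) _ _)]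
  ring

theorem tendsto_integral_exp_mul_of_tendsto_zero {w : ℝ → ℝ} {q : ℝ} (hq : 0 < q) (b : ℝ)
    (hw : Tendsto w atBot (𝓝 0)) (hint : ∀ c d, IntervalIntegrable w volume c d) :
    Tendsto (fun t => ∫ u in t..b, exp (-q * (u - t)) * w u) atBot (𝓝 0) := by
  have hii : ∀ t c d, IntervalIntegrable (fun u => exp (-q * (u - t)) * w u) volume c d :=
    fun t c d => (hint c d).continuousOn_mul (by fun_prop)
  rw [Metric.tendsto_nhds]
  intro ε hε
  -- Split `∫_t^b` at `T`: on `[t, T]` the function `w` is small and the kernel has mass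
  -- `≤ 1/q`, while the integral over `[T, b]` carries the vanishing factor `e^{-q(T-t)}`.
  obtain ⟨T, hT⟩ := eventually_atBot.1 (Metric.tendsto_nhds.1 hw (ε * q / 2) (by positivity))
  have htail : Tendsto (fun t => ∫ u in T..b, exp (-q * (u - t)) * w u) atBot (𝓝 0) := by
    have hfactor : ∀ t, ∫ u in T..b, exp (-q * (u - t)) * w u
        = exp (-q * (T - t)) * ∫ u in T..b, exp (-q * (u - T)) * w u := fun t => by
      rw [← intervalIntegral.integral_const_mul]
      congr 1 with u
      rw [← mul_assoc, ← exp_add]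
      ring_nf
    have := (tendsto_exp_neg_mul_sub_atBot hq T).mul_const
      (∫ u in T..b, exp (-q * (u - T)) * w u)
    rw [zero_mul] at this
    exact this.congr fun t => (hfactor t).symm
  filter_upwards [eventually_le_atBot T, htail.eventually (Metric.ball_mem_nhds 0 (half_pos hε))]
    with t ht htail_t
  have hhead : ‖∫ u in t..T, exp (-q * (u - t)) * w u‖ ≤ ε / 2 := by
    calc ‖∫ u in t..T, exp (-q * (u - t)) * w u‖
        ≤ ∫ u in t..T, exp (-q * (u - t)) * (ε * q / 2) := by
          refine intervalIntegral.norm_integral_le_of_norm_le ht (ae_of_all _ fun u hu => ?_)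
            (Continuous.intervalIntegrable (by fun_prop) _ _)
          rw [norm_mul, norm_of_nonneg (exp_pos _).le]
          have := hT u hu.2
          rw [dist_zero_right] at this
          gcongr
      _ = ε / 2 * (1 - exp (-q * (T - t))) := by
          rw [intervalIntegral.integral_mul_const, integral_exp_neg_mul_sub hq.ne', sub_self,
            mul_zero, exp_zero]
          field_simp
      _ ≤ ε / 2 := by
          have := exp_pos (-q * (T - t))
          nlinarith
  rw [dist_zero_right, ← intervalIntegral.integral_add_adjacent_intervals (hii t t T) (hii t T b)]
  calc ‖(∫ u in t..T, exp (-q * (u - t)) * w u) + ∫ u in T..b, exp (-q * (u - t)) * w u‖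
      ≤ ‖∫ u in t..T, exp (-q * (u - t)) * w u‖
          + ‖∫ u in T..b, exp (-q * (u - t)) * w u‖ := norm_add_le _ _
    _ < ε / 2 + ε / 2 := by
        refine add_lt_add_of_le_of_lt hhead ?_
        simpa [Metric.mem_ball] using htail_t
    _ = ε := add_halves ε

theorem tendsto_integral_exp_mul_of_tendsto {w : ℝ → ℝ} {q L : ℝ} (hq : 0 < q) (b : ℝ)
    (hw : Tendsto w atBot (𝓝 L)) (hint : ∀ c d, IntervalIntegrable w volume c d) :
    Tendsto (fun t => ∫ u in t..b, exp (-q * (u - t)) * w u) atBot (𝓝 (L / q)) := by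
  have hdev := tendsto_integral_exp_mul_of_tendsto_zero hq b (tendsto_sub_nhds_zero_iff.2 hw)
    fun c d => (hint c d).sub intervalIntegrable_const
  have hconst : Tendsto (fun t => ∫ u in t..b, exp (-q * (u - t)) * L) atBot (𝓝 (L / q)) := by
    simp_rw [intervalIntegral.integral_mul_const, integral_exp_neg_mul_sub hq.ne', sub_self,
      mul_zero, exp_zero]
    convert (((tendsto_exp_neg_mul_sub_atBot hq b).const_sub 1).div_const q).mul_const L using 2
    ring
  convert hdev.add hconst using 1
  · funext t
    rw [← intervalIntegral.integral_add
      (((hint t b).sub intervalIntegrable_const).continuousOn_mul (by fun_prop))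
      (Continuous.intervalIntegrable (by fun_prop) _ _)]
    congr 1 with u
    ring
  · simp

namespace StieltjesFunction

variable (ν : StieltjesFunction ℝ)

theorem integral_Ioc_integral_Icc {f : ℝ → ℝ} {a b : ℝ} (hf : IntegrableOn f (Ioc a b)) :
    ∫ s in Ioc a b, (∫ u in Icc s b, f u) ∂ν.measure
      = ∫ u in Ioc a b, (ν u - ν a) * f u := by
  have : IsFiniteMeasure (ν.measure.restrict (Ioc a b)) :=
    isFiniteMeasure_restrict.2 measure_Ioc_lt_top.ne
  have hint : Integrable (Function.uncurry fun s u => (Ici s).indicator f u)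
      ((ν.measure.restrict (Ioc a b)).prod (volume.restrict (Ioc a b))) :=
    (hf.comp_snd (ν.measure.restrict (Ioc a b))).indicator
      (measurableSet_le measurable_fst measurable_snd)
  calc ∫ s in Ioc a b, (∫ u in Icc s b, f u) ∂ν.measure
      = ∫ s in Ioc a b, (∫ u in Ioc a b, (Ici s).indicator f u) ∂ν.measure := by
        refine setIntegral_congr_fun measurableSet_Ioc fun s hs => ?_
        have : Ioc a b ∩ Ici s = Icc s b := by
          ext u; simp only [mem_inter_iff, mem_Ioc, mem_Ici, mem_Icc]; grind [hs.1]
        rw [setIntegral_indicator measurableSet_Ici, this]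
    _ = ∫ u in Ioc a b, ∫ s in Ioc a b, (Ici s).indicator f u ∂ν.measure :=
        integral_integral_swap hint
    _ = ∫ u in Ioc a b, (ν u - ν a) * f u := by
        refine setIntegral_congr_fun measurableSet_Ioc fun u hu => ?_
        have : (fun s => (Ici s).indicator f u) = (Iic u).indicator fun _ => f u := by
          ext s; simp [indicator_apply]
        rw [this, setIntegral_indicator measurableSet_Iic, Ioc_inter_Iic, min_eq_right hu.2,
          setIntegral_const, measureReal_def, measure_Ioc,
          ENNReal.toReal_ofReal (sub_nonneg.2 (ν.mono hu.1.le)), smul_eq_mul]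

theorem integral_Ioc_eq_sub_integral_deriv_mul {g g' : ℝ → ℝ} {a b : ℝ} (hab : a ≤ b)
    (hg : ∀ x ∈ Icc a b, HasDerivAt g (g' x) x) (hg' : IntegrableOn g' (Icc a b)) :
    ∫ s in Ioc a b, g s ∂ν.measure = g b * ν b - g a * ν a - ∫ u in a..b, g' u * ν u := by
  have hftc : ∀ s ∈ Icc a b, ∫ u in Icc s b, g' u = g b - g s := fun s hs => by
    have hsub : uIcc s b ⊆ Icc a b := uIcc_of_le hs.2 ▸ Icc_subset_Icc_left hs.1
    rw [integral_Icc_eq_integral_Ioc, ← intervalIntegral.integral_of_le hs.2,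
      intervalIntegral.integral_eq_sub_of_hasDerivAt (fun x hx => hg x (hsub hx))
        (hg'.mono_set hsub).intervalIntegrable]
  have hg_int : IntegrableOn g (Ioc a b) ν.measure :=
    ((HasDerivAt.continuousOn hg).integrableOn_compact isCompact_Icc).mono_set
      Ioc_subset_Icc_self
  have hconst : IntegrableOn (fun _ => g b) (Ioc a b) ν.measure :=
    integrableOn_const measure_Ioc_lt_top.ne
  have hg'_int : IntegrableOn g' (Ioc a b) := hg'.mono_set Ioc_subset_Icc_self
  have hg'ν_int : IntegrableOn (fun u => g' u * ν u) (Ioc a b) :=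
    hg'_int.mul_bdd ν.mono.measurable.aestronglyMeasurable
      (ae_restrict_of_forall_mem measurableSet_Ioc fun u hu =>
        abs_le_max_abs_abs (ν.mono hu.1.le) (ν.mono hu.2))
  have hfubini := ν.integral_Ioc_integral_Icc hg'_int
  rw [setIntegral_congr_fun measurableSet_Ioc fun s hs => hftc s (Ioc_subset_Icc_self hs),
    integral_sub hconst hg_int, setIntegral_const, measureReal_def, measure_Ioc,
    ENNReal.toReal_ofReal (sub_nonneg.2 (ν.mono hab)), smul_eq_mul] at hfubini
  have hsplit : ∫ u in Ioc a b, (ν u - ν a) * g' u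
      = (∫ u in a..b, g' u * ν u) - ν a * (g b - g a) := by
    rw [intervalIntegral.integral_of_le hab, ← hftc a ⟨le_rfl, hab⟩,
      integral_Icc_eq_integral_Ioc,
      ← integral_const_mul, ← integral_sub hg'ν_int (hg'_int.const_mul _)]
    congr 1 with u
    ring
  linear_combination -hfubini - hsplit

theorem exp_mul_integral_Ioc_exp_eq {B p t b : ℝ} (htb : t ≤ b) :
    exp (-B * t) * ∫ s in Ioc t b, exp (-p * (s - t)) ∂ν.measure
      = exp (-(p - B) * (b - t)) * (exp (-B * b) * ν b) - exp (-B * t) * ν t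
        + p * ∫ u in t..b, exp (-(p - B) * (u - t)) * (exp (-B * u) * ν u) := by
  have hderiv : ∀ s, HasDerivAt (fun s => exp (-p * (s - t))) (-p * exp (-p * (s - t))) s :=
    fun s => (((hasDerivAt_id s).sub_const t).const_mul (-p)).exp.congr_deriv
      (by simp only [id, mul_one]; ring)
  have hexp : ∀ u, exp (-B * t) * exp (-p * (u - t)) = exp (-(p - B) * (u - t)) * exp (-B * u) :=
    fun u => by rw [← exp_add, ← exp_add]; ring_nf
  have hI : exp (-B * t) * ∫ u in t..b, -p * exp (-p * (u - t)) * ν u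
      = -(p * ∫ u in t..b, exp (-(p - B) * (u - t)) * (exp (-B * u) * ν u)) := by
    rw [← intervalIntegral.integral_const_mul, ← intervalIntegral.integral_const_mul,
      ← intervalIntegral.integral_neg]
    congr 1 with u
    linear_combination (-p * ν u) * hexp u
  rw [ν.integral_Ioc_eq_sub_integral_deriv_mul htb (fun s _ => hderiv s)
    (Continuous.integrableOn_Icc (by fun_prop)), sub_self, mul_zero, exp_zero, one_mul,
    mul_sub, mul_sub, hI]
  linear_combination ν b * hexp b

end StieltjesFunction

theorem calculus_lemma_general (ν : StieltjesFunction ℝ) (A B p : ℝ)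
    (hB : 0 < B) (hp : B < p)
    (hlim : ∃ L ≤ A, Tendsto (fun t : ℝ => Real.exp (-B * t) * ν t) atBot (nhds L)) :
    Filter.liminf
      (fun t : ℝ =>
        Real.exp (-B * t) * ∫ s in Set.Ioc t 0, Real.exp (-p * (s - t)) ∂ν.measure)
      atBot ≤ A * B / (p - B) := by
  obtain ⟨L, hLA, hL⟩ := hlim
  have hq : 0 < p - B := sub_pos.2 hp
  have hw_int : ∀ c d, IntervalIntegrable (fun u => exp (-B * u) * ν u) volume c d :=
    fun _ _ => ν.mono.intervalIntegrable.continuousOn_mul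
      (g := fun u => exp (-B * u)) (by fun_prop)
  have hlimit : Tendsto
      (fun t : ℝ => exp (-B * t) * ∫ s in Ioc t 0, exp (-p * (s - t)) ∂ν.measure) atBot
      (𝓝 (0 * (exp (-B * 0) * ν 0) - L + p * (L / (p - B)))) := by
    refine ((((tendsto_exp_neg_mul_sub_atBot hq 0).mul_const _).sub hL).add
      ((tendsto_integral_exp_mul_of_tendsto hq 0 hL hw_int).const_mul p)).congr' ?_
    filter_upwards [eventually_le_atBot 0] with t ht
    exact (ν.exp_mul_integral_Ioc_exp_eq ht).symm
  rw [hlimit.liminf_eq, show 0 * (exp (-B * 0) * ν 0) - L + p * (L / (p - B)) = L * B / (p - B) by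
    field_simp; ring]
  gcongr

/-- Calculus lemma: if `ν` is an increasing (Stieltjes) function, positive on the
negative axis, with `e^{-Bt} ν(t) → L ≤ A` as `t → -∞`, then for every `p > B`,
`liminf_{t→-∞} e^{-Bt} ∫_t^0 e^{-p(s-t)} dν(s) ≤ A B / (p - B)`. -/
theorem calculus_lemma (ν : StieltjesFunction ℝ) (A B p : ℝ)
    (hA : 0 < A) (hB : 0 < B) (hp : B < p)
    (hpos : ∀ t < (0 : ℝ), 0 < ν t)
    (hlim : ∃ L ≤ A, Tendsto (fun t : ℝ => Real.exp (-B * t) * ν t) atBot (nhds L)) :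
    Filter.liminf
      (fun t : ℝ =>
        Real.exp (-B * t) * ∫ s in Set.Ioc t 0, Real.exp (-p * (s - t)) ∂ν.measure)
      atBot ≤ A * B / (p - B) :=
  calculus_lemma_general ν A B p hB hp hlim
end

section
/- Let H be a complex Hilbert space, K a closed subspace, f₀ ∈ H with minimal-norm coset element f̃ ∈ f₀ + K, and let S be a set of bounded linear functionals vanishing on K whose common kernel (within the annihilator topology) is dense in the annihilator of K in the dual norm. Then the supremum of |ξ(f₀)|²/‖ξ‖² over ξ ∈ S equals ‖f̃‖². -/
/-!
A functional `ξ` vanishing on `K` takes the same value at `f₀` and at `ft`, so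
`|ξ f₀|² / ‖ξ‖² ≤ ‖ft‖²`. Minimality makes `ft` orthogonal to `K`, hence `⟪ft, ·⟫` lies in
the annihilator and attains the bound. The ratio is continuous away from `0`, so its value `‖ft‖²`
at this point of the closure of `S` is already the supremum over `S`.
-/

theorem csSup_image_eq_of_mem_closure {X α : Type*} [TopologicalSpace X]
    [ConditionallyCompleteLinearOrder α] [TopologicalSpace α] [OrderTopology α]
    {f : X → α} {s : Set X} {x : X}
    (hx : x ∈ closure s) (hf : ContinuousAt f x) (hle : ∀ y ∈ s, f y ≤ f x) :
    sSup (f '' s) = f x :=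
  (isLUB_of_mem_closure (Set.forall_mem_image.2 hle) (mem_closure_image hf hx)).csSup_eq
    ((closure_nonempty_iff.1 ⟨x, hx⟩).image f)

namespace ContinuousLinearMap

variable {𝕜 𝕜₂ E F : Type*} [NontriviallyNormedField 𝕜] [NontriviallyNormedField 𝕜₂]
  {σ : 𝕜 →+* 𝕜₂} [RingHomIsometric σ]

theorem norm_apply_sq_div_opNorm_sq_le [SeminormedAddCommGroup E] [NormedSpace 𝕜 E]
    [SeminormedAddCommGroup F] [NormedSpace 𝕜₂ F]
    (ξ : E →SL[σ] F) (x : E) : ‖ξ x‖ ^ 2 / ‖ξ‖ ^ 2 ≤ ‖x‖ ^ 2 := by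
  refine div_le_of_le_mul₀ (by positivity) (by positivity) ?_
  rw [← mul_pow, mul_comm]
  exact pow_le_pow_left₀ (norm_nonneg _) (ξ.le_opNorm x) 2

theorem continuousAt_norm_apply_sq_div_opNorm_sq [NormedAddCommGroup E] [NormedSpace 𝕜 E]
    [NormedAddCommGroup F] [NormedSpace 𝕜₂ F]
    (x : E) {ξ : E →SL[σ] F} (hξ : ξ ≠ 0) :
    ContinuousAt (fun η : E →SL[σ] F => ‖η x‖ ^ 2 / ‖η‖ ^ 2) ξ :=
  ((continuous_eval_const x).norm.pow 2).continuousAt.div (continuous_norm.pow 2).continuousAt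
    (pow_ne_zero 2 (norm_ne_zero_iff.2 hξ))

end ContinuousLinearMap

section InnerProductSpace

variable {𝕜 E : Type*} [RCLike 𝕜] [NormedAddCommGroup E] [InnerProductSpace 𝕜 E]

theorem norm_innerSL_apply_self_sq_div_opNorm_sq (u : E) :
    ‖innerSL 𝕜 u u‖ ^ 2 / ‖innerSL 𝕜 u‖ ^ 2 = ‖u‖ ^ 2 := by
  rw [innerSL_apply_norm, innerSL_apply_apply, inner_self_eq_norm_sq_to_K, norm_pow,
    RCLike.norm_ofReal, abs_norm, sq (‖u‖ ^ 2), mul_self_div_self]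

theorem Submodule.mem_orthogonal_of_forall_norm_le_norm_add {K : Submodule 𝕜 E} {u : E}
    (hu : ∀ w ∈ K, ‖u‖ ≤ ‖u + w‖) : u ∈ Kᗮ := by
  have hinf : ‖u - 0‖ = ⨅ w : K, ‖u - w‖ := by
    refine le_antisymm (le_ciInf fun w => ?_) ?_
    · simpa only [sub_zero, ← sub_eq_add_neg] using hu _ (K.neg_mem w.2)
    · exact ciInf_le ⟨0, Set.forall_mem_range.2 fun _ => norm_nonneg _⟩ (0 : K)
  simpa only [sub_zero, mem_orthogonal'] using
    (K.norm_eq_iInf_iff_inner_eq_zero K.zero_mem).1 hinf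

end InnerProductSpace

theorem minimal_norm_dual_formula_dense_general (H : Type*) [NormedAddCommGroup H]
    [InnerProductSpace ℂ H]
    (K : Submodule ℂ H) (f₀ ft : H)
    (hft : ft ∈ {f : H | ∃ k ∈ K, f = f₀ + k})
    (hmin : ∀ f ∈ {f : H | ∃ k ∈ K, f = f₀ + k}, ‖ft‖ ≤ ‖f‖)
    (S : Set (H →L[ℂ] ℂ))
    (hdense : closure S = {ξ : H →L[ℂ] ℂ | ∀ k ∈ K, ξ k = 0}) :
    sSup {c : ℝ | ∃ ξ ∈ S, ξ ≠ 0 ∧ c = ‖ξ f₀‖ ^ 2 / ‖ξ‖ ^ 2} = ‖ft‖ ^ 2 := by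
  obtain ⟨k₀, hk₀, hft⟩ := hft
  set g : (H →L[ℂ] ℂ) → ℝ := fun ξ => ‖ξ f₀‖ ^ 2 / ‖ξ‖ ^ 2
  have hT : {c : ℝ | ∃ ξ ∈ S, ξ ≠ 0 ∧ c = g ξ} = g '' (S ∩ {0}ᶜ) := by
    ext c
    simp [eq_comm, and_assoc]
  have hcoset : ∀ ξ ∈ closure S, g ξ = ‖ξ ft‖ ^ 2 / ‖ξ‖ ^ 2 := by
    intro ξ hξ
    rw [hdense] at hξ
    simp only [g, hft, map_add, hξ k₀ hk₀, add_zero]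
  have hle : ∀ ξ ∈ S, g ξ ≤ ‖ft‖ ^ 2 := fun ξ hξ =>
    hcoset ξ (subset_closure hξ) ▸ ξ.norm_apply_sq_div_opNorm_sq_le ft
  rw [hT]
  refine le_antisymm
    (Real.sSup_le (Set.forall_mem_image.2 fun ξ hξ => hle ξ hξ.1) (by positivity)) ?_
  rcases eq_or_ne ft 0 with rfl | hft0
  · simpa using Real.sSup_nonneg (Set.forall_mem_image.2 fun ξ _ => by positivity)
  set ξ₀ := innerSL ℂ ft
  have hξ₀ne : ξ₀ ≠ 0 := by rwa [← norm_ne_zero_iff, innerSL_apply_norm, norm_ne_zero_iff]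
  have horth : ft ∈ Kᗮ := Submodule.mem_orthogonal_of_forall_norm_le_norm_add
    fun k hk => hmin _ ⟨k₀ + k, K.add_mem hk₀ hk, by rw [hft, add_assoc]⟩
  have hξ₀ : ξ₀ ∈ closure (S ∩ {0}ᶜ) :=
    isOpen_compl_singleton.closure_inter
      ⟨hdense ▸ (Submodule.mem_orthogonal' K ft).1 horth, hξ₀ne⟩
  have hgξ₀ : g ξ₀ = ‖ft‖ ^ 2 := by
    rw [hcoset ξ₀ (closure_mono Set.inter_subset_left hξ₀)]
    exact norm_innerSL_apply_self_sq_div_opNorm_sq ft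
  have hcont := ContinuousLinearMap.continuousAt_norm_apply_sq_div_opNorm_sq f₀ hξ₀ne
  rw [← hgξ₀]
  exact (csSup_image_eq_of_mem_closure hξ₀ hcont
    fun ξ hξ => (hle ξ hξ.1).trans_eq hgξ₀.symm).ge

/-- Dual formula for the minimal norm, computed over a dense subset `S` of the
annihilator of `K`: if `S` consists of functionals vanishing on `K` and is dense
(in dual norm) in the annihilator of `K`, then
`sup { |ξ(f₀)|²/‖ξ‖² : ξ ∈ S, ξ ≠ 0 } = ‖ft‖²` where `ft` is the minimal-norm
element of the coset `f₀ + K`. -/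
theorem minimal_norm_dual_formula_dense (H : Type*) [NormedAddCommGroup H]
    [InnerProductSpace ℂ H] [CompleteSpace H]
    (K : Submodule ℂ H) (hK : IsClosed (K : Set H)) (f₀ ft : H)
    (hft : ft ∈ {f : H | ∃ k ∈ K, f = f₀ + k})
    (hmin : ∀ f ∈ {f : H | ∃ k ∈ K, f = f₀ + k}, ‖ft‖ ≤ ‖f‖)
    (S : Set (H →L[ℂ] ℂ))
    (hS : S ⊆ {ξ : H →L[ℂ] ℂ | ∀ k ∈ K, ξ k = 0})
    (hdense : closure S = {ξ : H →L[ℂ] ℂ | ∀ k ∈ K, ξ k = 0}) :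
    sSup {c : ℝ | ∃ ξ ∈ S, ξ ≠ 0 ∧ c = ‖ξ f₀‖ ^ 2 / ‖ξ‖ ^ 2} = ‖ft‖ ^ 2 :=
  minimal_norm_dual_formula_dense_general H K f₀ ft hft hmin S hdense
end

section
/- Fix w ∈ ℂ^r and a unit vector h ∈ ℂ^r. In the affine chart on ℙ_{r-1} centered at [h] (with v = h + z, z ⊥ h), as t → -∞ one has ∫_{A_t} |⟨v, conj(w)⟩|²/|v|² dV_FS ~ (π^{r-1}/(r-1)!) e^{(r-1)t} |⟨h, conj(w)⟩|², where A_t is the ball { z : |z|² ≤ e^t/(1-e^t) } and dV_FS is the Fubini–Study volume form. -/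
/-! The integrand `g z = |(h + ι z)·w|² / ‖h + ι z‖² · (1 + ‖z‖²)^{-r}` is continuous at the
centre `z = 0` of the chart, where it equals `|h·w|²` because `‖h‖ = 1`. Hence its integral
over the shrinking ball `{‖z‖² < u}` is `g 0 · vol + o(vol)`, and that ball in `ℂ^{r-1}` has
volume `π^{r-1} u^{r-1} / (r-1)!`. For `u = e^t / (1 - e^t)` one has
`u^{r-1} = e^{(r-1)t} (1 - e^t)^{1-r} ∼ e^{(r-1)t}` as `t → -∞`. -/

open Real MeasureTheory Filter Topology Fintype Nat

theorem ContinuousAt.tendsto_setAverage {X E ι : Type*} [MeasurableSpace X] [TopologicalSpace X]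
    [OpensMeasurableSpace X] [NormedAddCommGroup E] [NormedSpace ℝ E] [CompleteSpace E]
    {μ : Measure X} [IsLocallyFiniteMeasure μ] {f : X → E} {x : X} (hf : ContinuousAt f x)
    (hfm : StronglyMeasurableAtFilter f (𝓝 x) μ) {s : ι → Set X} {l : Filter ι}
    (hs : Tendsto s l (𝓝 x).smallSets) (hμs : ∀ᶠ i in l, μ (s i) ≠ 0) :
    Tendsto (fun i => ⨍ y in s i, f y ∂μ) l (𝓝 (f x)) := by
  have hfin : ∀ᶠ i in l, μ (s i) < ⊤ := hs.eventually (μ.finiteAt_nhds x).eventually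
  have hsmall := (hf.integral_sub_linear_isLittleO_ae hfm hs).tendsto_inv_smul_nhds_zero
  refine tendsto_sub_nhds_zero_iff.mp (hsmall.congr' ?_)
  filter_upwards [hμs, hfin] with i hi hi'
  have : μ.real (s i) ≠ 0 := (ENNReal.toReal_pos hi hi'.ne).ne'
  rw [smul_sub, inv_smul_smul₀ this, setAverage_eq]

theorem volume_sum_norm_sq_lt (ι : Type*) [Fintype ι] {u : ℝ} (hu : 0 < u) :
    volume {z : ι → ℂ | ∑ i, ‖z i‖ ^ 2 < u} =
      ENNReal.ofReal (π ^ card ι / (card ι)! * u ^ card ι) := by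
  cases isEmpty_or_nonempty ι with
  | inl hι =>
    have huniv : {z : ι → ℂ | ∑ i, ‖z i‖ ^ 2 < u} = Set.univ := by
      ext z; simp [hu]
    rw [huniv, volume_pi, Measure.pi_univ]
    simp
  | inr hι =>
    have hball : {z : ι → ℂ | ∑ i, ‖z i‖ ^ 2 < u}
        = {z : ι → ℂ | (∑ i, ‖z i‖ ^ (2 : ℝ)) ^ (1 / 2 : ℝ) < √u} := by
      ext z
      simp only [Set.mem_ofPred_eq, Real.rpow_two, ← Real.sqrt_eq_rpow]
      exact (Real.sqrt_lt_sqrt_iff (by positivity)).symm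
    rw [hball, Complex.volume_sum_rpow_lt (ι := ι) one_le_two,
      ← ENNReal.ofReal_pow (Real.sqrt_nonneg u), ← ENNReal.ofReal_mul (by positivity), pow_mul,
      Real.sq_sqrt hu.le]
    norm_num [Real.Gamma_nat_eq_factorial]
    rw [mul_comm]

theorem tendsto_setOf_sum_norm_sq_lt_smallSets (ι : Type*) [Fintype ι] :
    Tendsto (fun u : ℝ => {z : ι → ℂ | ∑ i, ‖z i‖ ^ 2 < u}) (𝓝 0) (𝓝 (0 : ι → ℂ)).smallSets := by
  refine Metric.nhds_basis_ball.smallSets.tendsto_right_iff.mpr fun δ hδ => ?_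
  filter_upwards [eventually_lt_nhds (pow_pos hδ 2)] with u hu z hz
  refine mem_ball_zero_iff.mpr ((pi_norm_lt_iff hδ).mpr fun i => ?_)
  refine lt_of_pow_lt_pow_left₀ 2 hδ.le ?_
  calc ‖z i‖ ^ 2 ≤ ∑ j, ‖z j‖ ^ 2 :=
        Finset.single_le_sum (fun j _ => sq_nonneg ‖z j‖) (Finset.mem_univ i)
    _ < u := hz
    _ < δ ^ 2 := hu

theorem tendsto_integral_div_volume_sum_norm_sq_lt {ι : Type*} [Fintype ι]
    {f : (ι → ℂ) → ℝ} (hf : ContinuousAt f 0) (hfm : Measurable f) :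
    Tendsto (fun u => (∫ z in {z : ι → ℂ | ∑ i, ‖z i‖ ^ 2 < u}, f z) /
      (π ^ card ι / (card ι)! * u ^ card ι)) (𝓝[>] 0) (𝓝 (f 0)) := by
  have hvol : ∀ᶠ u in 𝓝[>] (0 : ℝ), volume {z : ι → ℂ | ∑ i, ‖z i‖ ^ 2 < u} =
      ENNReal.ofReal (π ^ card ι / (card ι)! * u ^ card ι) :=
    eventually_mem_nhdsWithin.mono fun u hu => volume_sum_norm_sq_lt ι hu
  have hpos : ∀ᶠ u in 𝓝[>] (0 : ℝ), 0 < π ^ card ι / (card ι)! * u ^ card ι :=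
    eventually_mem_nhdsWithin.mono fun u (hu : 0 < u) => by positivity
  have havg := hf.tendsto_setAverage (μ := volume) hfm.stronglyMeasurable.stronglyMeasurableAtFilter
    ((tendsto_setOf_sum_norm_sq_lt_smallSets ι).mono_left nhdsWithin_le_nhds)
    (by filter_upwards [hvol, hpos] with u hu hu'; simpa [hu] using hu')
  refine havg.congr' ?_
  filter_upwards [hvol, hpos] with u hu hu'
  rw [setAverage_eq, measureReal_def, hu, ENNReal.toReal_ofReal hu'.le, smul_eq_mul,
    inv_mul_eq_div]

theorem tendsto_exp_div_one_sub_exp_atBot :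
    Tendsto (fun t => exp t / (1 - exp t)) atBot (𝓝[>] 0) := by
  refine tendsto_nhdsWithin_iff.mpr ⟨?_, ?_⟩
  · have hden : Tendsto (fun t => 1 - exp t) atBot (𝓝 1) := by
      simpa using tendsto_const_nhds.sub tendsto_exp_atBot
    have hquot := tendsto_exp_atBot.div hden one_ne_zero
    rwa [zero_div] at hquot
  · filter_upwards [tendsto_exp_atBot.eventually_lt_const one_pos] with t ht
    exact div_pos (exp_pos t) (sub_pos.mpr ht)

theorem tendsto_exp_div_one_sub_exp_pow_div_exp_mul (n : ℕ) :
    Tendsto (fun t => (exp t / (1 - exp t)) ^ n / exp (n * t)) atBot (𝓝 1) := by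
  have hlim : Tendsto (fun t => ((1 - exp t) ^ n)⁻¹) atBot (𝓝 1) := by
    simpa using ((tendsto_const_nhds.sub tendsto_exp_atBot).pow n).inv₀
      (by simp : ((1 : ℝ) - 0) ^ n ≠ 0)
  refine hlim.congr' ?_
  filter_upwards [tendsto_exp_atBot.eventually_lt_const one_pos] with t ht
  rw [div_pow, exp_nat_mul]
  field_simp

theorem continuousAt_chart_integrand {r n : ℕ} {h : EuclideanSpace ℂ (Fin r)} (hh : h ≠ 0)
    (w : EuclideanSpace ℂ (Fin r)) (ι : (Fin n → ℂ) →ₗ[ℂ] EuclideanSpace ℂ (Fin r)) (k : ℕ) :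
    ContinuousAt (fun z => ‖∑ i, (h + ι z) i * w i‖ ^ 2 / ‖h + ι z‖ ^ 2 *
      (1 / (1 + ∑ i, ‖z i‖ ^ 2) ^ k)) 0 := by
  have : Continuous ι := ι.continuous_of_finiteDimensional
  have : Continuous (WithLp.ofLp : EuclideanSpace ℂ (Fin r) → Fin r → ℂ) :=
    PiLp.continuous_ofLp 2 _
  have hnum : Continuous fun z => ‖∑ i, (h + ι z) i * w i‖ ^ 2 := by fun_prop
  have hden : Continuous fun z => ‖h + ι z‖ ^ 2 := by fun_prop
  have hweight : Continuous fun z : Fin n → ℂ => (1 + ∑ i, ‖z i‖ ^ 2) ^ k := by fun_prop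
  exact (hnum.continuousAt.div hden.continuousAt (by simpa using hh)).mul
    (continuousAt_const.div hweight.continuousAt (by simp))

theorem chart_integral_asymptotics_general (r : ℕ) (hr : 1 ≤ r)
    (h w : EuclideanSpace ℂ (Fin r)) (hh : ‖h‖ = 1)
    (ι : (Fin (r - 1) → ℂ) →ₗ[ℂ] EuclideanSpace ℂ (Fin r))
    (hw : (∑ i, h i * w i) ≠ 0) :
    Tendsto
      (fun t : ℝ =>
        (∫ z in {z : Fin (r - 1) → ℂ |
            ∑ i, ‖z i‖ ^ 2 < Real.exp t / (1 - Real.exp t)},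
          ‖∑ i, (h + ι z) i * w i‖ ^ 2 / ‖h + ι z‖ ^ 2 *
            (1 / (1 + ∑ i, ‖z i‖ ^ 2) ^ r)) /
        (π ^ (r - 1) / (Nat.factorial (r - 1)) * Real.exp (((r : ℝ) - 1) * t) *
          ‖∑ i, h i * w i‖ ^ 2))
      atBot (nhds 1) := by
  set g : (Fin (r - 1) → ℂ) → ℝ := fun z =>
    ‖∑ i, (h + ι z) i * w i‖ ^ 2 / ‖h + ι z‖ ^ 2 * (1 / (1 + ∑ i, ‖z i‖ ^ 2) ^ r)
  have hg : ContinuousAt g 0 :=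
    continuousAt_chart_integrand (norm_ne_zero_iff.mp (by simp [hh])) w ι r
  have hgm : Measurable g := by
    have : Continuous ι := ι.continuous_of_finiteDimensional
    fun_prop
  have hg0 : g 0 = ‖∑ i, h i * w i‖ ^ 2 := by simp [g, hh]
  have havg := (tendsto_integral_div_volume_sum_norm_sq_lt hg hgm).comp
    tendsto_exp_div_one_sub_exp_atBot
  rw [hg0, Fintype.card_fin] at havg
  have hlim := (havg.div_const (‖∑ i, h i * w i‖ ^ 2)).mul
    (tendsto_exp_div_one_sub_exp_pow_div_exp_mul (r - 1))
  rw [div_self (pow_ne_zero 2 (norm_ne_zero_iff.mpr hw)), one_mul] at hlim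
  refine hlim.congr' ?_
  filter_upwards [tendsto_exp_atBot.eventually_lt_const one_pos] with t ht
  rw [← Nat.cast_pred hr, Function.comp_apply]
  generalize ∫ z in {z : Fin (r - 1) → ℂ | ∑ i, ‖z i‖ ^ 2 < exp t / (1 - exp t)}, g z = I
  field_simp

/-- In the affine chart at a unit vector `h` of `ℂ^r` (points `v = h + ι z` where `ι`
is a unitary identification of `ℂ^{r-1}` with `h^⊥`), as `t → -∞` the integral of
`|v·w|²/|v|²` against the Fubini–Study volume over the ball
`A_t = {‖z‖² < e^t/(1-e^t)}` is asymptotic to `(π^{r-1}/(r-1)!) e^{(r-1)t} |h·w|²`,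
where `x·y = ∑ i, x i * y i`. -/
theorem chart_integral_asymptotics (r : ℕ) (hr : 1 ≤ r)
    (h w : EuclideanSpace ℂ (Fin r)) (hh : ‖h‖ = 1)
    (ι : (Fin (r - 1) → ℂ) →ₗ[ℂ] EuclideanSpace ℂ (Fin r))
    (hι : ∀ z : Fin (r - 1) → ℂ, ‖ι z‖ ^ 2 = ∑ i, ‖z i‖ ^ 2)
    (hrange : LinearMap.range ι = (ℂ ∙ h)ᗮ)
    (hw : (∑ i, h i * w i) ≠ 0) :
    Tendsto
      (fun t : ℝ =>
        (∫ z in {z : Fin (r - 1) → ℂ |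
            ∑ i, ‖z i‖ ^ 2 < Real.exp t / (1 - Real.exp t)},
          ‖∑ i, (h + ι z) i * w i‖ ^ 2 / ‖h + ι z‖ ^ 2 *
            (1 / (1 + ∑ i, ‖z i‖ ^ 2) ^ r)) /
        (π ^ (r - 1) / (Nat.factorial (r - 1)) * Real.exp (((r : ℝ) - 1) * t) *
          ‖∑ i, h i * w i‖ ^ 2))
      atBot (nhds 1) :=
  chart_integral_asymptotics_general r hr h w hh ι hw
end

section
/- Let A, B > 0 and p > B. Suppose ν : (-∞,0] → ℝ₊ is increasing with e^{-Bt}ν(t) → A as t → -∞, and define II(t) := e^{-Bt} ∫_t^0 e^{-p(s-t)} dν(s). Then there exists a sequence t_j → -∞ along which II(t_j) converges to a limit at most AB/(p-B). -/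
open Filter MeasureTheory Real Set Topology

/-!
Integrating by parts against the Stieltjes measure (Tonelli applied to
`φ s - φ 0 = ∫_s^0 (-φ')` with `φ s = e^{-p(s-t)}`) gives
`II(t) = e^{(p-B)t} ν(0) - e^{-Bt} ν(t) + p ∫_t^0 e^{(p-B)(t-u)} g(u) du` with `g(u) = e^{-Bu} ν(u)`.
As `g → A` at `-∞` and `ν` is monotone, `g` is bounded on `(-∞, 0]`, so after the substitution
`u = t + v` dominated convergence shows that the last integral tends to `A / (p - B)`.
Hence `II(t) → -A + pA/(p-B) = AB/(p-B)` as `t → -∞`; any `t_j → -∞` will do.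
-/

theorem StieltjesFunction.lintegral_Ioc_lintegral_Icc (f : StieltjesFunction ℝ)
    {g : ℝ → ENNReal} (hg : Measurable g) (a b : ℝ) :
    ∫⁻ s in Ioc a b, (∫⁻ u in Icc s b, g u) ∂f.measure =
      ∫⁻ u in Ioc a b, g u * ENNReal.ofReal (f u - f a) := by
  have hmeas : Measurable (Function.uncurry fun s u => (Icc s b).indicator g u) := by
    have : (Function.uncurry fun s u => (Icc s b).indicator g u) =
        {q : ℝ × ℝ | q.1 ≤ q.2 ∧ q.2 ≤ b}.indicator (fun q => g q.2) := by
      ext ⟨s, u⟩; simp [indicator_apply]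
    rw [this]
    exact (hg.comp measurable_snd).indicator
      ((measurableSet_le measurable_fst measurable_snd).inter
        (measurableSet_le measurable_snd measurable_const))
  simp_rw [← lintegral_indicator measurableSet_Icc]
  refine (lintegral_lintegral_swap hmeas.aemeasurable).trans ?_
  rw [← lintegral_indicator measurableSet_Ioc]
  refine lintegral_congr fun u => ?_
  by_cases hu : u ∈ Ioc a b
  · have : ∀ s, (Icc s b).indicator g u = (Iic u).indicator (fun _ => g u) s := by
      intro s; simp [indicator_apply, hu.2]
    simp_rw [this]
    rw [lintegral_indicator_const measurableSet_Iic, Measure.restrict_apply measurableSet_Iic,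
      indicator_of_mem hu, ← f.measure_Ioc]
    congr 2
    ext s
    simp only [mem_inter_iff, mem_Iic, mem_Ioc]
    constructor
    · rintro ⟨hsu, has, -⟩; exact ⟨has, hsu⟩
    · rintro ⟨has, hsu⟩; exact ⟨hsu, has, hsu.trans hu.2⟩
  · rw [indicator_of_notMem hu]
    refine (setLIntegral_congr_fun measurableSet_Ioc fun s hs => ?_).trans lintegral_zero
    exact indicator_of_notMem (fun hsu => hu ⟨hs.1.trans_le hsu.1, hsu.2⟩) g

theorem StieltjesFunction.integral_Ioc_sub_eq_integral_neg_deriv_mul (f : StieltjesFunction ℝ)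
    {φ φ' : ℝ → ℝ} {a b : ℝ} (hφ : ∀ x, HasDerivAt φ (φ' x) x) (hφ' : Continuous φ')
    (hφ'_nonpos : ∀ x, φ' x ≤ 0) :
    ∫ x in Ioc a b, (φ x - φ b) ∂f.measure = ∫ u in Ioc a b, -φ' u * (f u - f a) := by
  have hφcont : Continuous φ := continuous_iff_continuousAt.2 fun x => (hφ x).continuousAt
  have hftc : ∀ s ≤ b, φ s - φ b = ∫ u in Icc s b, -φ' u := by
    intro s hs
    rw [integral_Icc_eq_integral_Ioc, ← intervalIntegral.integral_of_le hs,
      intervalIntegral.integral_neg,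
      intervalIntegral.integral_eq_sub_of_hasDerivAt (fun x _ => hφ x) (hφ'.intervalIntegrable _ _)]
    ring
  have hnonneg : ∀ s ≤ b, 0 ≤ φ s - φ b := fun s hs =>
    (hftc s hs).symm ▸ setIntegral_nonneg measurableSet_Icc fun u _ => neg_nonneg.2 (hφ'_nonpos u)
  have hlin : ∀ s ≤ b, ENNReal.ofReal (φ s - φ b) = ∫⁻ u in Icc s b, ENNReal.ofReal (-φ' u) := by
    intro s hs
    rw [hftc s hs]
    exact ofReal_integral_eq_lintegral_ofReal (f := fun u => -φ' u) hφ'.neg.integrableOn_Icc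
      (Eventually.of_forall fun u => neg_nonneg.2 (hφ'_nonpos u))
  rw [integral_eq_lintegral_of_nonneg_ae, integral_eq_lintegral_of_nonneg_ae]
  · congr 1
    rw [setLIntegral_congr_fun measurableSet_Ioc fun s hs => hlin s hs.2,
      f.lintegral_Ioc_lintegral_Icc (g := fun u => ENNReal.ofReal (-φ' u))
        hφ'.neg.measurable.ennreal_ofReal]
    refine setLIntegral_congr_fun measurableSet_Ioc fun u hu => ?_
    rw [ENNReal.ofReal_mul (neg_nonneg.2 (hφ'_nonpos u))]
  · filter_upwards [ae_restrict_mem measurableSet_Ioc] with u hu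
    exact mul_nonneg (neg_nonneg.2 (hφ'_nonpos u)) (sub_nonneg.2 (f.mono hu.1.le))
  · exact (hφ'.neg.measurable.mul (f.mono.measurable.sub_const _)).aestronglyMeasurable
  · filter_upwards [ae_restrict_mem measurableSet_Ioc] with s hs
    exact hnonneg s hs.2
  · exact (hφcont.sub continuous_const).aestronglyMeasurable

theorem StieltjesFunction.integral_Ioc_eq_sub_integral_deriv_mul_s14 (f : StieltjesFunction ℝ)
    {φ φ' : ℝ → ℝ} {a b : ℝ} (hab : a ≤ b) (hφ : ∀ x, HasDerivAt φ (φ' x) x)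
    (hφ' : Continuous φ') (hφ'_nonpos : ∀ x, φ' x ≤ 0) :
    ∫ x in Ioc a b, φ x ∂f.measure = φ b * f b - φ a * f a - ∫ x in Ioc a b, φ' x * f x := by
  have hφcont : Continuous φ := continuous_iff_continuousAt.2 fun x => (hφ x).continuousAt
  have hφ'f : IntegrableOn (fun x => φ' x * f x) (Ioc a b) :=
    (f.mono.intervalIntegrable.continuousOn_mul hφ'.continuousOn).1
  have hφ'_int : ∫ x in Ioc a b, φ' x = φ b - φ a := by
    rw [← intervalIntegral.integral_of_le hab,
      intervalIntegral.integral_eq_sub_of_hasDerivAt (fun x _ => hφ x) (hφ'.intervalIntegrable _ _)]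
  have hsplit : ∫ x in Ioc a b, φ x ∂f.measure =
      (∫ x in Ioc a b, (φ x - φ b) ∂f.measure) + φ b * (f b - f a) := by
    rw [integral_sub hφcont.integrableOn_Ioc (integrableOn_const measure_Ioc_lt_top.ne),
      setIntegral_const, measureReal_def, f.measure_Ioc, ENNReal.toReal_ofReal
      (sub_nonneg.2 (f.mono hab)), smul_eq_mul]
    ring
  have hexpand : ∫ u in Ioc a b, -φ' u * (f u - f a) =
      -(∫ x in Ioc a b, φ' x * f x) + f a * ∫ x in Ioc a b, φ' x := by
    have : (fun u => -φ' u * (f u - f a)) = fun u => -(φ' u * f u) + f a * φ' u := by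
      ext u; ring
    rw [this, integral_add (f := fun u => -(φ' u * f u)) hφ'f.neg
      (hφ'.integrableOn_Ioc.const_mul _), integral_neg,
      integral_const_mul]
  rw [hsplit, f.integral_Ioc_sub_eq_integral_neg_deriv_mul hφ hφ' hφ'_nonpos, hexpand, hφ'_int]
  ring

theorem Monotone.exists_abs_exp_mul_le_of_tendsto_atBot {f : ℝ → ℝ} (hf : Monotone f)
    {A B : ℝ} (hB : 0 ≤ B) (hlim : Tendsto (fun u => exp (-B * u) * f u) atBot (𝓝 A)) :
    ∃ K, ∀ u ≤ 0, |exp (-B * u) * f u| ≤ K := by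
  obtain ⟨T, hT⟩ := eventually_atBot.1 (hlim.abs.eventually (gt_mem_nhds (lt_add_one |A|)))
  refine ⟨max (|A| + 1) (exp (-B * T) * (|f T| + |f 0|)), fun u hu => ?_⟩
  rcases le_or_gt u T with huT | hTu
  · exact le_max_of_le_left (hT u huT).le
  · refine le_max_of_le_right ?_
    have hfu : |f u| ≤ |f T| + |f 0| := abs_le.2
      ⟨by linarith [hf hTu.le, neg_abs_le (f T), abs_nonneg (f 0)],
        by linarith [hf hu, le_abs_self (f 0), abs_nonneg (f T)]⟩
    rw [abs_mul, abs_of_pos (exp_pos _)]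
    exact mul_le_mul (exp_le_exp.2 (by nlinarith)) hfu (abs_nonneg _) (exp_pos _).le

theorem tendsto_integral_Ioc_exp_mul_atBot {g : ℝ → ℝ} {c A K : ℝ} (hc : 0 < c)
    (hg : Measurable g) (hK : ∀ u ≤ 0, |g u| ≤ K) (hlim : Tendsto g atBot (𝓝 A)) :
    Tendsto (fun t => ∫ u in Ioc t 0, exp (c * (t - u)) * g u) atBot (𝓝 (A / c)) := by
  set F : ℝ → ℝ → ℝ := fun t => (Ioc 0 (-t)).indicator fun v => exp (-c * v) * g (v + t)
  have hshift : ∀ t, ∫ u in Ioc t 0, exp (c * (t - u)) * g u = ∫ v, F t v := by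
    intro t
    rw [← integral_indicator measurableSet_Ioc, ← integral_add_right_eq_self _ t]
    congr 1 with v
    simp only [F, indicator_apply, mem_Ioc]
    congr 1
    · apply propext; constructor <;> rintro ⟨h1, h2⟩ <;> constructor <;> linarith
    · ring_nf
  have hlimit : A / c = ∫ v, (Ioi 0).indicator (fun v => exp (-c * v) * A) v := by
    rw [integral_indicator measurableSet_Ioi, integral_mul_const,
      integral_exp_mul_Ioi (neg_neg_of_pos hc)]
    field_simp
    simp
  simp_rw [hshift]
  rw [hlimit]
  refine tendsto_integral_filter_of_dominated_convergence
    ((Ioi 0).indicator fun v => exp (-c * v) * K) ?_ ?_ ?_ ?_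
  · exact Eventually.of_forall fun t =>
      (((measurable_const.mul measurable_id).exp.mul
        (hg.comp (measurable_add_const t))).indicator measurableSet_Ioc).aestronglyMeasurable
  · refine Eventually.of_forall fun t => ae_of_all _ fun v => ?_
    simp only [F, norm_indicator_eq_indicator_norm]
    by_cases hv : v ∈ Ioc 0 (-t)
    · rw [indicator_of_mem hv, indicator_of_mem (show v ∈ Ioi 0 from hv.1), norm_mul,
        norm_of_nonneg (exp_pos _).le, Real.norm_eq_abs]
      exact mul_le_mul_of_nonneg_left (hK _ (by linarith [hv.2])) (exp_pos _).le
    · rw [indicator_of_notMem hv]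
      exact indicator_nonneg (fun v _ => mul_nonneg (exp_pos _).le
        ((abs_nonneg _).trans (hK 0 le_rfl))) v
  · exact IntegrableOn.integrable_indicator
      ((integrableOn_exp_mul_Ioi (neg_neg_of_pos hc) 0).mul_const K) measurableSet_Ioi
  · refine ae_of_all _ fun v => ?_
    rcases le_or_gt v 0 with hv | hv
    · simp [F, not_lt.2 hv]
    · rw [indicator_of_mem (show v ∈ Ioi 0 from hv)]
      have hev : ∀ᶠ t in atBot, F t v = exp (-c * v) * g (v + t) :=
        (eventually_le_atBot (-v)).mono fun t ht =>
          indicator_of_mem (show v ∈ Ioc 0 (-t) from ⟨hv, by linarith⟩) _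
      refine Tendsto.congr' (EventuallyEq.symm hev) ?_
      exact (hlim.comp (tendsto_atBot_add_const_left _ v tendsto_id)).const_mul _

theorem StieltjesFunction.exp_mul_integral_Ioc_exp_eq_s14 (ν : StieltjesFunction ℝ) {B p t : ℝ}
    (hp : 0 ≤ p) (ht : t ≤ 0) :
    exp (-B * t) * ∫ s in Ioc t 0, exp (-p * (s - t)) ∂ν.measure =
      exp ((p - B) * t) * ν 0 - exp (-B * t) * ν t +
        p * ∫ u in Ioc t 0, exp ((p - B) * (t - u)) * (exp (-B * u) * ν u) := by
  have hderiv : ∀ x, HasDerivAt (fun s => exp (-p * (s - t))) (-p * exp (-p * (x - t))) x :=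
    fun x => by
      simpa [mul_comm] using ((hasDerivAt_id x).sub_const t).const_mul (-p) |>.exp
  have hkernel : ∀ x, exp (-B * t) * (-p * exp (-p * (x - t)) * ν x) =
      -p * (exp ((p - B) * (t - x)) * (exp (-B * x) * ν x)) := fun x => by
    have : exp (-B * t) * exp (-p * (x - t)) = exp ((p - B) * (t - x)) * exp (-B * x) := by
      rw [← exp_add, ← exp_add]; ring_nf
    linear_combination (-p * ν x) * this
  rw [ν.integral_Ioc_eq_sub_integral_deriv_mul_s14 ht hderiv (by fun_prop)
    fun x => mul_nonpos_of_nonpos_of_nonneg (neg_nonpos.2 hp) (exp_pos _).le,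
    mul_sub, mul_sub, ← integral_const_mul]
  simp_rw [hkernel]
  have hexp : exp (-B * t) * exp (-p * (0 - t)) = exp ((p - B) * t) := by
    rw [← exp_add]; ring_nf
  rw [integral_const_mul, sub_self, mul_zero, exp_zero, one_mul]
  linear_combination ν 0 * hexp

theorem StieltjesFunction.tendsto_exp_mul_integral_Ioc_exp_atBot (ν : StieltjesFunction ℝ)
    {A B p : ℝ} (hB : 0 < B) (hp : B < p)
    (hlim : Tendsto (fun t => exp (-B * t) * ν t) atBot (𝓝 A)) :
    Tendsto (fun t => exp (-B * t) * ∫ s in Ioc t 0, exp (-p * (s - t)) ∂ν.measure) atBot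
      (𝓝 (A * B / (p - B))) := by
  have hc : 0 < p - B := sub_pos.2 hp
  obtain ⟨K, hK⟩ := ν.mono.exists_abs_exp_mul_le_of_tendsto_atBot hB.le hlim
  have hboundary : Tendsto (fun t => exp ((p - B) * t) * ν 0) atBot (𝓝 0) := by
    simpa using (tendsto_exp_atBot.comp (tendsto_id.const_mul_atBot hc)).mul_const (ν 0)
  have hkernel := tendsto_integral_Ioc_exp_mul_atBot hc
    ((measurable_const.mul measurable_id).exp.mul ν.mono.measurable) hK hlim
  have hsum := (hboundary.sub hlim).add (hkernel.const_mul p)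
  rw [show 0 - A + p * (A / (p - B)) = A * B / (p - B) by field_simp; ring] at hsum
  refine hsum.congr' ?_
  filter_upwards [eventually_le_atBot 0] with t ht
  exact (ν.exp_mul_integral_Ioc_exp_eq_s14 (hB.trans hp).le ht).symm

theorem calculus_lemma_seq_general (ν : StieltjesFunction ℝ) (A B p : ℝ)
    (hB : 0 < B) (hp : B < p)
    (hlim : Tendsto (fun t : ℝ => Real.exp (-B * t) * ν t) atBot (nhds A)) :
    ∃ tj : ℕ → ℝ, Tendsto tj atTop atBot ∧
      ∃ l ≤ A * B / (p - B),
        Tendsto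
          (fun j : ℕ =>
            Real.exp (-B * tj j) *
              ∫ s in Set.Ioc (tj j) 0, Real.exp (-p * (s - tj j)) ∂ν.measure)
          atTop (nhds l) := by
  have htj : Tendsto (fun j : ℕ => -(j : ℝ)) atTop atBot :=
    tendsto_neg_atTop_atBot.comp tendsto_natCast_atTop_atTop
  exact ⟨_, htj, _, le_rfl, (ν.tendsto_exp_mul_integral_Ioc_exp_atBot hB hp hlim).comp htj⟩

/-- Sequence extraction from the calculus lemma: if `ν` is increasing, positive on the
negative axis, with `e^{-Bt} ν(t) → A` as `t → -∞`, and
`II(t) = e^{-Bt} ∫_t^0 e^{-p(s-t)} dν(s)`, then there is a sequence `t_j → -∞`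
along which `II(t_j)` converges to a limit at most `AB/(p-B)`. -/
theorem calculus_lemma_seq (ν : StieltjesFunction ℝ) (A B p : ℝ)
    (hA : 0 < A) (hB : 0 < B) (hp : B < p)
    (hpos : ∀ t < (0 : ℝ), 0 < ν t)
    (hlim : Tendsto (fun t : ℝ => Real.exp (-B * t) * ν t) atBot (nhds A)) :
    ∃ tj : ℕ → ℝ, Tendsto tj atTop atBot ∧
      ∃ l ≤ A * B / (p - B),
        Tendsto
          (fun j : ℕ =>
            Real.exp (-B * tj j) *
              ∫ s in Set.Ioc (tj j) 0, Real.exp (-p * (s - tj j)) ∂ν.measure)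
          atTop (nhds l) :=
  calculus_lemma_seq_general ν A B p hB hp hlim
end

section
/- Let μ be a finite measure on a space X and u : X → [-∞, 0] measurable with μ({u = -∞}) = 0. Define ν(t) := μ({u ≤ t}) for t < 0 and suppose e^{-kt} ν(t) → c as t → -∞ for some constants k > 0 and c ≥ 0. Then for any δ > 0, liminf_{t→-∞} e^{-kt} ∫_{{u > t}} e^{(k+δ)(t - u)} dμ ≤ ck/δ. -/
/-!
Writing `e^{-p s} = ∫_{σ ≥ s} p e^{-pσ} dσ` for `s = u - t ≥ 0` and applying Tonelli turns the
tail integral into `∫_0^∞ p e^{-pσ} (ν(t+σ) - ν(t)) dσ`, with `p = k + δ`. Multiplied by `e^{-kt}`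
this is `p ∫_0^∞ e^{-δσ} g(t+σ) dσ - g(t)` with `g(τ) = e^{-kτ} ν(τ) → c`, and since `g` is bounded,
dominated convergence gives the limit `p c / δ - c = c k / δ`: the liminf is in fact a limit.
-/

open MeasureTheory Filter Real
open Set Topology

theorem integrableOn_Ici_exp_neg_mul {p : ℝ} (hp : 0 < p) (a : ℝ) :
    IntegrableOn (fun σ => exp (-p * σ)) (Ici a) :=
  (integrableOn_Ici_iff_integrableOn_Ioi).2 (exp_neg_integrableOn_Ioi a hp)

theorem integral_Ici_exp_neg_mul {p : ℝ} (hp : 0 < p) (a : ℝ) :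
    ∫ σ in Ici a, exp (-p * σ) = exp (-p * a) / p := by
  rw [integral_Ici_eq_integral_Ioi, integral_exp_mul_Ioi (neg_lt_zero.2 hp), neg_div_neg_eq]

theorem lintegral_Ici_ofReal_mul_exp_neg_mul {p : ℝ} (hp : 0 < p) (a : ℝ) :
    ∫⁻ σ in Ici a, ENNReal.ofReal (p * exp (-p * σ)) = ENNReal.ofReal (exp (-p * a)) := by
  rw [← ofReal_integral_eq_lintegral_ofReal ((integrableOn_Ici_exp_neg_mul hp a).const_mul p)
    (ae_of_all _ fun σ => by positivity), integral_const_mul, integral_Ici_exp_neg_mul hp,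
    mul_div_cancel₀ _ hp.ne']

theorem lintegral_ofReal_exp_neg_mul_eq_lintegral_meas_le {X : Type*} [MeasurableSpace X]
    {μ : Measure X} [SFinite μ] {f : X → ℝ} (hf : Measurable f) (hf0 : ∀ᵐ x ∂μ, 0 ≤ f x)
    {p : ℝ} (hp : 0 < p) :
    ∫⁻ x, ENNReal.ofReal (exp (-p * f x)) ∂μ
      = ∫⁻ σ in Ici 0, ENNReal.ofReal (p * exp (-p * σ)) * μ {x | f x ≤ σ} := by
  set w : ℝ → ENNReal := fun σ => ENNReal.ofReal (p * exp (-p * σ))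
  have hpoint : ∀ᵐ x ∂μ, ENNReal.ofReal (exp (-p * f x))
      = ∫⁻ σ in Ici 0, {x' | f x' ≤ σ}.indicator (fun _ => w σ) x := by
    filter_upwards [hf0] with x hx
    have hind : ∀ σ, {x' | f x' ≤ σ}.indicator (fun _ => w σ) x = (Ici (f x)).indicator w σ :=
      fun σ => by simp only [indicator_apply, mem_ofPred_eq, mem_Ici]
    simp_rw [hind]
    rw [lintegral_indicator measurableSet_Ici, Measure.restrict_restrict measurableSet_Ici,
      Ici_inter_Ici, max_eq_left hx, lintegral_Ici_ofReal_mul_exp_neg_mul hp]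
  have hmeas : Measurable fun z : X × ℝ => {x' | f x' ≤ z.2}.indicator (fun _ => w z.2) z.1 :=
    Measurable.indicator (by fun_prop) (measurableSet_le (hf.comp measurable_fst) measurable_snd)
  rw [lintegral_congr_ae hpoint, lintegral_lintegral_swap hmeas.aemeasurable]
  refine setLIntegral_congr_fun measurableSet_Ici fun σ _ => ?_
  rw [lintegral_indicator_const (measurableSet_le hf measurable_const), mul_comm]

theorem setIntegral_mul_exp_neg_mul_sub {p : ℝ} (hp : 0 < p) {h : ℝ → ℝ} (hh : Measurable h)
    {C : ℝ} (hC : ∀ τ, |h τ| ≤ C) (t : ℝ) :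
    ∫ σ in Ici 0, p * exp (-p * σ) * (h (t + σ) - h t)
      = p * (∫ σ in Ici 0, exp (-p * σ) * h (t + σ)) - h t := by
  have hexp := integrableOn_Ici_exp_neg_mul hp 0
  have hint : IntegrableOn (fun σ => exp (-p * σ) * h (t + σ)) (Ici 0) :=
    hexp.mul_bdd (hh.comp (measurable_const_add t)).aestronglyMeasurable
      (ae_of_all _ fun σ => hC _)
  simp_rw [mul_sub, mul_assoc]
  rw [integral_sub (hint.const_mul p) ((hexp.mul_const _).const_mul p), integral_const_mul,
    integral_const_mul, integral_mul_const, integral_Ici_exp_neg_mul hp, mul_zero, exp_zero,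
    one_div, ← mul_assoc, mul_inv_cancel₀ hp.ne', one_mul]

theorem tendsto_setIntegral_exp_neg_mul_comp_add_atBot {g : ℝ → ℝ} (hg : Measurable g)
    {M : ℝ} (hgM : ∀ τ, |g τ| ≤ M) {c : ℝ} (hgc : Tendsto g atBot (𝓝 c)) {δ : ℝ} (hδ : 0 < δ) :
    Tendsto (fun t => ∫ σ in Ici 0, exp (-δ * σ) * g (t + σ)) atBot (𝓝 (c / δ)) := by
  have hlimit : ∫ σ in Ici 0, exp (-δ * σ) * c = c / δ := by
    rw [integral_mul_const, integral_Ici_exp_neg_mul hδ, mul_zero, exp_zero, one_div,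
      inv_mul_eq_div]
  rw [← hlimit]
  refine tendsto_integral_filter_of_dominated_convergence (fun σ => M * exp (-δ * σ))
    (Eventually.of_forall fun t => by fun_prop) (Eventually.of_forall fun t => ?_)
    ((integrableOn_Ici_exp_neg_mul hδ 0).const_mul M) (ae_of_all _ fun σ => ?_)
  · refine ae_of_all _ fun σ => ?_
    rw [norm_mul, norm_of_nonneg (exp_pos _).le, mul_comm, norm_eq_abs]
    exact mul_le_mul_of_nonneg_right (hgM _) (exp_pos _).le
  · exact (hgc.comp (tendsto_atBot_add_const_right _ σ tendsto_id)).const_mul _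

theorem exists_forall_abs_exp_mul_le {h : ℝ → ℝ} {k C c : ℝ} (hk : 0 ≤ k)
    (hC : ∀ τ, |h τ| ≤ C) (hlim : Tendsto (fun τ => exp (-k * τ) * h τ) atBot (𝓝 c)) :
    ∃ M, ∀ τ, |exp (-k * τ) * h τ| ≤ M := by
  obtain ⟨T, hT⟩ :=
    eventually_atBot.1 (hlim.abs.eventually (eventually_le_nhds (lt_add_one |c|)))
  refine ⟨max (|c| + 1) (exp (-k * T) * C), fun τ => ?_⟩
  rcases le_total τ T with hτ | hτ
  · exact (hT τ hτ).trans (le_max_left _ _)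
  · refine le_max_of_le_right ?_
    rw [abs_mul, abs_of_pos (exp_pos _)]
    exact mul_le_mul (exp_le_exp.2 (by nlinarith)) (hC τ) (abs_nonneg _) (exp_pos _).le

theorem EReal.toReal_sub_le_iff_le_coe_add {y : EReal} {t σ : ℝ} (hy : y ≠ ⊤)
    (ht : (t : EReal) < y) : y.toReal - t ≤ σ ↔ y ≤ ↑(t + σ) := by
  lift y to ℝ using ⟨hy, ht.ne_bot⟩
  rw [EReal.toReal_coe, EReal.coe_le_coe_iff, sub_le_iff_le_add']

section sublevel

variable {X : Type*} [MeasurableSpace X]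

def sublevelMeasure (μ : Measure X) (u : X → EReal) (t : ℝ) : ℝ :=
  (μ {x | u x ≤ t}).toReal

variable (μ : Measure X) [IsFiniteMeasure μ] (u : X → EReal)

theorem sublevelMeasure_mono : Monotone (sublevelMeasure μ u) := fun _ _ hst =>
  measureReal_mono fun _ hx => le_trans hx (EReal.coe_le_coe_iff.2 hst)

theorem abs_sublevelMeasure_le (t : ℝ) : |sublevelMeasure μ u t| ≤ μ.real univ := by
  rw [sublevelMeasure, abs_of_nonneg ENNReal.toReal_nonneg]
  exact measureReal_mono (subset_univ _)

theorem measure_preimage_Ioc_eq_ofReal_sublevelMeasure_sub (hu : Measurable u) {t σ : ℝ}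
    (hσ : 0 ≤ σ) :
    μ (u ⁻¹' Ioc ↑t ↑(t + σ))
      = ENNReal.ofReal (sublevelMeasure μ u (t + σ) - sublevelMeasure μ u t) := by
  have hsub : {x | u x ≤ t} ⊆ {x | u x ≤ ↑(t + σ)} :=
    fun x hx => le_trans hx (EReal.coe_le_coe_iff.2 (by linarith))
  have hdiff : u ⁻¹' Ioc ↑t ↑(t + σ) = {x | u x ≤ ↑(t + σ)} \ {x | u x ≤ t} := by
    ext x
    simp only [mem_preimage, mem_Ioc, mem_ofPred_eq, Set.mem_sdiff, not_le, and_comm]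
  rw [hdiff, measure_sdiff hsub (measurableSet_le hu measurable_const).nullMeasurableSet
    (measure_ne_top _ _), sublevelMeasure, sublevelMeasure,
    ENNReal.ofReal_sub _ ENNReal.toReal_nonneg, ENNReal.ofReal_toReal (measure_ne_top _ _),
    ENNReal.ofReal_toReal (measure_ne_top _ _)]

theorem toReal_setLIntegral_exp_eq_setIntegral (hu : Measurable u) (hu_top : ∀ x, u x ≠ ⊤)
    {p : ℝ} (hp : 0 < p) (t : ℝ) :
    (∫⁻ x in {x | (t : EReal) < u x}, ENNReal.ofReal (exp (p * (t - (u x).toReal))) ∂μ).toReal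
      = ∫ σ in Ici 0,
          p * exp (-p * σ) * (sublevelMeasure μ u (t + σ) - sublevelMeasure μ u t) := by
  have hS : MeasurableSet {x | (t : EReal) < u x} := measurableSet_lt measurable_const hu
  have hpos : ∀ᵐ x ∂μ.restrict {x | (t : EReal) < u x}, 0 ≤ (u x).toReal - t :=
    ae_restrict_of_forall_mem hS fun x hx => sub_nonneg.2 <| by
      simpa using EReal.toReal_le_toReal hx.le (EReal.coe_ne_bot t) (hu_top x)
  have hlayer : ∀ σ ∈ Ici (0 : ℝ),
      μ.restrict {x | (t : EReal) < u x} {x | (u x).toReal - t ≤ σ}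
        = ENNReal.ofReal (sublevelMeasure μ u (t + σ) - sublevelMeasure μ u t) := by
    intro σ hσ
    rw [Measure.restrict_apply (measurableSet_le (by fun_prop) measurable_const),
      ← measure_preimage_Ioc_eq_ofReal_sublevelMeasure_sub μ u hu hσ]
    congr 1
    ext x
    simp only [mem_inter_iff, mem_ofPred_eq, mem_preimage, mem_Ioc]
    exact ⟨fun ⟨h1, h2⟩ => ⟨h2, (EReal.toReal_sub_le_iff_le_coe_add (hu_top x) h2).1 h1⟩,
      fun ⟨h2, h1⟩ => ⟨(EReal.toReal_sub_le_iff_le_coe_add (hu_top x) h2).2 h1, h2⟩⟩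
  have hmono := sublevelMeasure_mono μ u
  have hexp : ∀ x, exp (p * (t - (u x).toReal)) = exp (-p * ((u x).toReal - t)) :=
    fun x => by congr 1; ring
  simp_rw [hexp]
  rw [lintegral_ofReal_exp_neg_mul_eq_lintegral_meas_le (by fun_prop) hpos hp,
    setLIntegral_congr_fun measurableSet_Ici fun σ hσ => by rw [hlayer σ hσ],
    integral_eq_lintegral_of_nonneg_ae]
  · exact congrArg ENNReal.toReal <| setLIntegral_congr_fun measurableSet_Ici fun σ _ =>
      (ENNReal.ofReal_mul (by positivity)).symm
  · exact ae_restrict_of_forall_mem measurableSet_Ici fun σ hσ =>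
      mul_nonneg (by positivity) (sub_nonneg.2 (hmono (le_add_of_nonneg_right hσ)))
  · have := hmono.measurable
    fun_prop

end sublevel

theorem liminf_tail_integral_general (X : Type*) [MeasurableSpace X] (μ : Measure X)
    [IsFiniteMeasure μ] (u : X → EReal) (hu : Measurable u)
    (hu0 : ∀ x, u x ≤ 0)
    (k δ c : ℝ) (hk : 0 < k) (hδ : 0 < δ)
    (hν : Tendsto (fun t : ℝ =>
        Real.exp (-k * t) * (μ {x | u x ≤ (t : EReal)}).toReal) atBot (nhds c)) :
    Filter.liminf
      (fun t : ℝ =>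
        Real.exp (-k * t) *
          (∫⁻ x in {x | (t : EReal) < u x},
            ENNReal.ofReal (Real.exp ((k + δ) * (t - (u x).toReal))) ∂μ).toReal)
      atBot ≤ c * k / δ := by
  have hkδ : 0 < k + δ := add_pos hk hδ
  have hν_meas := (sublevelMeasure_mono μ u).measurable
  set g : ℝ → ℝ := fun τ => exp (-k * τ) * sublevelMeasure μ u τ
  have hg : Tendsto g atBot (𝓝 c) := hν
  obtain ⟨M, hM⟩ := exists_forall_abs_exp_mul_le hk.le (abs_sublevelMeasure_le μ u) hg
  have hsplit : ∀ t : ℝ, exp (-k * t) *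
      (∫⁻ x in {x | (t : EReal) < u x},
        ENNReal.ofReal (exp ((k + δ) * (t - (u x).toReal))) ∂μ).toReal
      = (k + δ) * (∫ σ in Ici 0, exp (-δ * σ) * g (t + σ)) - g t := by
    intro t
    have hshift : ∀ σ, exp (-k * t) * (exp (-(k + δ) * σ) * sublevelMeasure μ u (t + σ))
        = exp (-δ * σ) * g (t + σ) := fun σ => by
      simp only [g, ← mul_assoc, ← exp_add]
      congr 2
      ring
    rw [toReal_setLIntegral_exp_eq_setIntegral μ u hu
        (fun x => ((hu0 x).trans_lt EReal.zero_lt_top).ne) hkδ t,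
      setIntegral_mul_exp_neg_mul_sub hkδ hν_meas (abs_sublevelMeasure_le μ u), mul_sub,
      mul_left_comm, ← integral_const_mul]
    simp_rw [hshift]
    rfl
  have hlim := ((tendsto_setIntegral_exp_neg_mul_comp_add_atBot (by fun_prop) hM hg hδ).const_mul
    (k + δ)).sub hg
  have hvalue : (k + δ) * (c / δ) - c = c * k / δ := by
    field_simp
    ring
  rw [funext hsplit, hlim.liminf_eq, hvalue]

/-- If `μ` is finite, `u : X → [-∞,0]` with `μ({u = -∞}) = 0`,
`ν(t) = μ({u ≤ t})` satisfies `e^{-kt} ν(t) → c` as `t → -∞`, then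
`liminf_{t→-∞} e^{-kt} ∫_{u > t} e^{(k+δ)(t-u)} dμ ≤ ck/δ`. -/
theorem liminf_tail_integral (X : Type*) [MeasurableSpace X] (μ : Measure X)
    [IsFiniteMeasure μ] (u : X → EReal) (hu : Measurable u)
    (hu0 : ∀ x, u x ≤ 0) (hbot : μ {x | u x = ⊥} = 0)
    (k δ c : ℝ) (hk : 0 < k) (hδ : 0 < δ) (hc : 0 ≤ c)
    (hν : Tendsto (fun t : ℝ =>
        Real.exp (-k * t) * (μ {x | u x ≤ (t : EReal)}).toReal) atBot (nhds c)) :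
    Filter.liminf
      (fun t : ℝ =>
        Real.exp (-k * t) *
          (∫⁻ x in {x | (t : EReal) < u x},
            ENNReal.ofReal (Real.exp ((k + δ) * (t - (u x).toReal))) ∂μ).toReal)
      atBot ≤ c * k / δ :=
  liminf_tail_integral_general X μ u hu hu0 k δ c hk hδ hν
end
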